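/- arXiv:1409.4033 — 2 statements merged into one kernel-verified Lean document; each statement's English description precedes it below -/
import Mathlib

section
/- Let N be geometric on ℕ with P(N = n) = (1−w)^n w, and let Z₁, Z₂, … be i.i.d. integer-valued random variables with pmf h, independent of N, with w·h(0) < 1. Let S = Σ_{j=1}^N Z_j (S = 0 if N = 0) with pmf f. Then f satisfies, for all m, the linear relation f(m)(1 − (1−w)h(0)) = w·𝟙{m=0} + (1−w)·Σ_{k ≠ 0} h(k)·f(m−k). -/
open scoped ENNReal

/-- The law of the sum of `n` i.i.d. draws from `ν`. -/
noncomputable def iidSumPMF (ν : PMF ℤ) : ℕ → PMF ℤ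
  | 0 => PMF.pure 0
  | n + 1 => ν.bind fun x => (iidSumPMF ν n).map fun y => x + y

lemma iidSumPMF_succ_apply (ν : PMF ℤ) (n : ℕ) (m : ℤ) :
    iidSumPMF ν (n + 1) m = ∑' k : ℤ, ν k * iidSumPMF ν n (m - k) := by
  show (ν.bind fun x => (iidSumPMF ν n).map fun y => x + y) m = _
  rw [PMF.bind_apply]
  refine tsum_congr fun x => ?_
  congr 1
  rw [PMF.map_apply]
  rw [tsum_eq_single (m - x) (fun y hy => ?_)]
  · simp
  · rw [if_neg]; omega

lemma ennreal_rec
    (w : ℝ) (hw0 : 0 < w) (hw1 : w < 1)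
    (ν : PMF ℤ) (Ngeo : PMF ℕ)
    (hN : ∀ n : ℕ, Ngeo n = ENNReal.ofReal ((1 - w) ^ n * w)) (m : ℤ) :
    (Ngeo.bind (iidSumPMF ν)) m =
      ENNReal.ofReal w * (if m = 0 then 1 else 0) +
        ENNReal.ofReal (1 - w) * ∑' k : ℤ, ν k * (Ngeo.bind (iidSumPMF ν)) (m - k) := by
  have hw' : (0:ℝ) ≤ 1 - w := by linarith
  have key : ∀ n : ℕ, Ngeo (n + 1) = ENNReal.ofReal (1 - w) * Ngeo n := by
    intro n
    rw [hN, hN, ← ENNReal.ofReal_mul hw']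
    ring_nf
  rw [PMF.bind_apply, tsum_eq_zero_add' ENNReal.summable]
  have h0 : Ngeo 0 * iidSumPMF ν 0 m = ENNReal.ofReal w * (if m = 0 then 1 else 0) := by
    rw [hN]
    show _ * (PMF.pure 0) m = _
    rw [PMF.pure_apply]
    simp [eq_comm]
  rw [h0]
  congr 1
  calc ∑' n : ℕ, Ngeo (n + 1) * iidSumPMF ν (n + 1) m
      = ∑' n : ℕ, ENNReal.ofReal (1 - w) * ∑' k : ℤ, Ngeo n * (ν k * iidSumPMF ν n (m - k)) := by
        refine tsum_congr fun n => ?_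
        rw [key, iidSumPMF_succ_apply, ← ENNReal.tsum_mul_left, ← ENNReal.tsum_mul_left]
        refine tsum_congr fun k => ?_
        ring
    _ = ENNReal.ofReal (1 - w) * ∑' k : ℤ, ν k * (Ngeo.bind (iidSumPMF ν)) (m - k) := by
        rw [ENNReal.tsum_mul_left]
        congr 1
        rw [ENNReal.tsum_comm]
        refine tsum_congr fun k => ?_
        rw [PMF.bind_apply, ← ENNReal.tsum_mul_left]
        refine tsum_congr fun n => ?_
        ring

/-- Compound-geometric (Panjer/De Pril type) recursion. Let `N` be
geometric on `ℕ` with `P(N = n) = (1 − w)^n w`, `Z₁, Z₂, …` i.i.d. with pmf `h` on `ℤ`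
independent of `N`, with `w·h(0) < 1`, and let `f` be the pmf of `S = Σ_{j=1}^N Z_j`
(here: the compound pmf `N.bind (iidSumPMF ν)`). Then for all `m ∈ ℤ`:
`f(m)(1 − (1 − w)h(0)) = w·𝟙{m = 0} + (1 − w)·Σ_{k ≠ 0} h(k)·f(m − k)`. -/
theorem compound_geometric_recursion
    (w : ℝ) (hw0 : 0 < w) (hw1 : w < 1)
    (ν : PMF ℤ) (Ngeo : PMF ℕ)
    (hN : ∀ n : ℕ, Ngeo n = ENNReal.ofReal ((1 - w) ^ n * w))
    (h : ℤ → ℝ) (hh : ∀ k : ℤ, h k = (ν k).toReal)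
    (hwh : w * h 0 < 1)
    (f : ℤ → ℝ) (hf : ∀ m : ℤ, f m = ((Ngeo.bind (iidSumPMF ν)) m).toReal) :
    ∀ m : ℤ,
      f m * (1 - (1 - w) * h 0) =
        w * (if m = 0 then (1 : ℝ) else 0) +
          (1 - w) * ∑' k : ℤ, (if k = 0 then (0 : ℝ) else h k * f (m - k)) := by
  intro m
  set F : ℤ → ℝ≥0∞ := fun m => (Ngeo.bind (iidSumPMF ν)) m with hF
  have hFfin : ∀ m, F m ≠ ∞ := fun m => PMF.apply_ne_top _ m
  have hfin : ∀ k : ℤ, ν k * F (m - k) ≠ ∞ :=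
    fun k => ENNReal.mul_ne_top (PMF.apply_ne_top _ k) (hFfin _)
  have hsumfin : ∑' k : ℤ, ν k * F (m - k) ≠ ∞ := by
    refine ne_top_of_le_ne_top (b := ∑' k : ℤ, ν k) ?_ (ENNReal.tsum_le_tsum fun k => ?_)
    · rw [ν.tsum_coe]; exact ENNReal.one_ne_top
    · calc ν k * F (m - k) ≤ ν k * 1 := by
            exact mul_le_mul_right (PMF.coe_le_one _ _) _
        _ = ν k := mul_one _
  -- real recursion
  have hrec : f m = w * (if m = 0 then (1:ℝ) else 0)
      + (1 - w) * ∑' k : ℤ, h k * f (m - k) := by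
    have := ennreal_rec w hw0 hw1 ν Ngeo hN m
    have h2 := congrArg ENNReal.toReal this
    rw [ENNReal.toReal_add, ENNReal.toReal_mul, ENNReal.toReal_mul,
      ENNReal.tsum_toReal_eq hfin] at h2
    · rw [hf, h2, ENNReal.toReal_ofReal hw0.le, ENNReal.toReal_ofReal (by linarith)]
      congr 1
      · congr 1; split <;> simp
      · congr 1
        refine tsum_congr fun k => ?_
        rw [ENNReal.toReal_mul, hh, hf]
    · exact ENNReal.mul_ne_top ENNReal.ofReal_ne_top (by split <;> simp)
    · exact ENNReal.mul_ne_top ENNReal.ofReal_ne_top hsumfin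
  -- split off the k = 0 term
  have hsummable : Summable fun k : ℤ => h k * f (m - k) := by
    have := ENNReal.summable_toReal hsumfin
    refine this.congr fun k => ?_
    rw [ENNReal.toReal_mul, ← hh, ← hf]
  have hsplit : ∑' k : ℤ, h k * f (m - k) =
      h 0 * f (m - 0) + ∑' k : ℤ, (if k = 0 then (0:ℝ) else h k * f (m - k)) := by
    rw [Summable.tsum_eq_add_tsum_ite hsummable 0]
  rw [hsplit] at hrec
  rw [sub_zero] at hrec
  nlinarith [hrec]
end

section
/- Let H ~ Exp(1), let I ≥ 0 be independent of H, let A > 0, t > 0, Tρ > 0, 0 < c_min < c_max, and set C = max(min(A·I/H, c_max), c_min). Then E[e^{−tTρ·C}] = e^{−tTρ c_max} + tTρ ∫_{1/c_max}^{1/c_min} u^{−2} e^{−tTρ/u} E[e^{−A·I·u}] du. -/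
/-!
With `s = tTρ` and `X = A I / H`, every outcome satisfies
`e^{-s C} = e^{-s c_max} + s ∫_{(c_min, c_max]} 1{X < w} e^{-s w} dw`.
Taking expectations and swapping the integrals turns the indicator into `P(X < w)`, which is
`P(H > A I / w) = E[e^{-A I / w}]` by independence and the exponential tail of `H`.
The substitution `u = 1/w` then gives the formula.
-/

open MeasureTheory ProbabilityTheory Set Function

theorem setIntegral_Ioc_indicator_Ioi {E : Type*} [NormedAddCommGroup E] [NormedSpace ℝ E]
    {a b : ℝ} (hab : a ≤ b) (x : ℝ) (f : ℝ → E) :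
    ∫ w in Ioc a b, (Ioi x).indicator f w = ∫ w in max (min x b) a..b, f w := by
  have hIoc : Ioc a b ∩ Ioi x = Ioc (max (min x b) a) b := by
    rw [Ioc_inter_Ioi]
    rcases le_or_gt x b with hx | hx
    · rw [min_eq_left hx, max_comm]
    · rw [min_eq_right hx.le, max_eq_left hab, Ioc_self, Ioc_eq_empty (by simp [hx.le])]
  rw [setIntegral_indicator measurableSet_Ioi, hIoc,
    intervalIntegral.integral_of_le (max_le (min_le_right x b) hab)]

theorem intervalIntegral.mul_integral_exp_neg_mul (s a b : ℝ) :
    s * ∫ w in a..b, Real.exp (-s * w) = Real.exp (-s * a) - Real.exp (-s * b) := by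
  have hderiv (w : ℝ) : HasDerivAt (fun w ↦ -Real.exp (-s * w)) (s * Real.exp (-s * w)) w := by
    refine ((hasDerivAt_id w).const_mul (-s)).exp.neg.congr_deriv ?_
    simp only [id, mul_one]
    ring
  rw [← intervalIntegral.integral_const_mul,
    intervalIntegral.integral_eq_sub_of_hasDerivAt (fun w _ ↦ hderiv w)
      ((by fun_prop : Continuous fun w ↦ s * Real.exp (-s * w)).intervalIntegrable _ _)]
  ring

theorem exp_neg_mul_max_min_eq {a b : ℝ} (hab : a ≤ b) (s x : ℝ) :
    Real.exp (-s * max (min x b) a) = Real.exp (-s * b) +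
      s * ∫ w in Ioc a b, (Ioi x).indicator (fun w ↦ Real.exp (-s * w)) w := by
  rw [setIntegral_Ioc_indicator_Ioi hab, intervalIntegral.mul_integral_exp_neg_mul]
  ring

theorem intervalIntegral.integral_comp_inv {a b : ℝ} (ha : 0 < a) (hb : 0 < b) (f : ℝ → ℝ) :
    ∫ w in a..b, f w⁻¹ = ∫ u in b⁻¹..a⁻¹, (u ^ 2)⁻¹ * f u := by
  have hpos : ∀ x ∈ uIcc a⁻¹ b⁻¹, 0 < x := fun x hx ↦
    lt_of_lt_of_le (lt_min (inv_pos.2 ha) (inv_pos.2 hb)) hx.1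
  have key := intervalIntegral.integral_comp_mul_deriv_of_deriv_nonpos (g := fun w ↦ f w⁻¹)
    (f' := fun u ↦ -(u ^ 2)⁻¹) (continuousOn_inv₀.mono fun x hx ↦ (hpos x hx).ne')
    (fun x hx ↦ hasDerivAt_inv (hpos x (Ioo_subset_Icc_self hx)).ne')
    (fun x _ ↦ neg_nonpos.2 (by positivity))
  simp only [comp_apply, inv_inv] at key
  rw [← key, intervalIntegral.integral_symm, ← intervalIntegral.integral_neg]
  simp [mul_comm]

section Fubini

variable {Ω : Type*} [MeasurableSpace Ω] {P : Measure Ω} [IsFiniteMeasure P] {X : Ω → ℝ}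
  {μ : Measure ℝ} [SFinite μ] {E : Type*} [NormedAddCommGroup E] {g : ℝ → E}

theorem integrable_uncurry_indicator_Ioi (hX : Measurable X) (hg : Integrable g μ) :
    Integrable (uncurry fun ω w ↦ (Ioi (X ω)).indicator g w) (P.prod μ) := by
  have huncurry : (uncurry fun ω w ↦ (Ioi (X ω)).indicator g w) =
      {p : Ω × ℝ | X p.1 < p.2}.indicator fun p ↦ g p.2 := rfl
  rw [huncurry]
  exact (hg.comp_snd P).indicator (measurableSet_lt (hX.comp measurable_fst) measurable_snd)

theorem integral_integral_indicator_Ioi [NormedSpace ℝ E] [CompleteSpace E] (hX : Measurable X)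
    (hg : Integrable g μ) :
    ∫ ω, ∫ w, (Ioi (X ω)).indicator g w ∂μ ∂P = ∫ w, P.real {ω | X ω < w} • g w ∂μ := by
  rw [integral_integral_swap (integrable_uncurry_indicator_Ioi hX hg)]
  refine integral_congr_ae (ae_of_all _ fun w ↦ ?_)
  exact integral_indicator_const (g w) (measurableSet_lt hX measurable_const)

end Fubini

section ExponentialTail

variable {Ω : Type*} [MeasurableSpace Ω] {P : Measure Ω} {H Y : Ω → ℝ}

theorem integrable_exp_neg_of_nonneg [IsFiniteMeasure P] (hY : Measurable Y)
    (hY0 : ∀ ω, 0 ≤ Y ω) :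
    Integrable (fun ω ↦ Real.exp (-Y ω)) P :=
  (integrable_const 1).mono' (by fun_prop) <| ae_of_all _ fun ω ↦ by
    simpa [Real.abs_exp] using hY0 ω

theorem measureReal_lt_eq_integral_exp_neg [IsFiniteMeasure P] (hY : Measurable Y)
    (hH : Measurable H) (hexp : ∀ h : ℝ, 0 ≤ h → P {ω | h < H ω} = ENNReal.ofReal (Real.exp (-h)))
    (hY0 : ∀ ω, 0 ≤ Y ω) (hind : IndepFun Y H P) :
    P.real {ω | Y ω < H ω} = ∫ ω, Real.exp (-Y ω) ∂P := by
  have hlt : MeasurableSet {p : ℝ × ℝ | p.1 < p.2} := measurableSet_lt measurable_fst measurable_snd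
  have hmapY0 : ∀ᵐ y ∂P.map Y, 0 ≤ y :=
    (ae_map_iff hY.aemeasurable measurableSet_Ici).2 (ae_of_all _ hY0)
  have hlintegral : P {ω | Y ω < H ω} = ∫⁻ ω, ENNReal.ofReal (Real.exp (-Y ω)) ∂P :=
    calc P {ω | Y ω < H ω} = P.map (fun ω ↦ (Y ω, H ω)) {p | p.1 < p.2} := by
          rw [Measure.map_apply (hY.prodMk hH) hlt]; rfl
      _ = ∫⁻ y, P.map H (Ioi y) ∂P.map Y := by
          rw [hind.map_prod_eq_prod_map_map hY.aemeasurable hH.aemeasurable,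
            Measure.prod_apply hlt]; rfl
      _ = ∫⁻ y, ENNReal.ofReal (Real.exp (-y)) ∂P.map Y := by
          refine lintegral_congr_ae (hmapY0.mono fun y hy ↦ ?_)
          exact (Measure.map_apply hH measurableSet_Ioi).trans (hexp y hy)
      _ = ∫⁻ ω, ENNReal.ofReal (Real.exp (-Y ω)) ∂P := lintegral_map (by fun_prop) hY
  rw [measureReal_def, hlintegral, ← ofReal_integral_eq_lintegral_ofReal
    (integrable_exp_neg_of_nonneg hY hY0) (ae_of_all _ fun ω ↦ (Real.exp_pos _).le),
    ENNReal.toReal_ofReal (integral_nonneg fun ω ↦ (Real.exp_pos _).le)]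

theorem measureReal_div_lt_eq_integral_exp_neg [IsProbabilityMeasure P] (hY : Measurable Y)
    (hH : Measurable H) (hexp : ∀ h : ℝ, 0 ≤ h → P {ω | h < H ω} = ENNReal.ofReal (Real.exp (-h)))
    (hY0 : ∀ ω, 0 ≤ Y ω) (hind : IndepFun Y H P) {w : ℝ} (hw : 0 < w) :
    P.real {ω | Y ω / H ω < w} = ∫ ω, Real.exp (-(Y ω * w⁻¹)) ∂P := by
  have hH0 : ∀ᵐ ω ∂P, 0 < H ω :=
    (mem_ae_iff_prob_eq_one (measurableSet_lt measurable_const hH)).2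
      (by simpa using hexp 0 le_rfl)
  have hset : {ω | Y ω / H ω < w} =ᵐ[P] {ω | Y ω * w⁻¹ < H ω} := by
    refine Filter.eventuallyEq_set.2 (hH0.mono fun ω hω ↦ ?_)
    change Y ω / H ω < w ↔ Y ω * w⁻¹ < H ω
    rw [div_lt_iff₀ hω, mul_inv_lt_iff₀ hw, mul_comm w]
  rw [measureReal_congr hset]
  exact measureReal_lt_eq_integral_exp_neg (hY.mul_const _) hH hexp
    (fun ω ↦ mul_nonneg (hY0 ω) (inv_nonneg.2 hw.le))
    (hind.comp (measurable_mul_const _) measurable_id)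

end ExponentialTail

theorem truncated_laplace_formula_general
    {Ω : Type*} [MeasurableSpace Ω] (P : Measure Ω) [IsProbabilityMeasure P]
    (H I : Ω → ℝ) (hH : Measurable H) (hI : Measurable I)
    (hexp : ∀ h : ℝ, 0 ≤ h → P {ω | h < H ω} = ENNReal.ofReal (Real.exp (-h)))
    (hInonneg : ∀ ω, 0 ≤ I ω)
    (hind : IndepFun H I P)
    (A t T ρ : ℝ) (hA : 0 < A)
    (cmin cmax : ℝ) (hc0 : 0 < cmin) (hcc : cmin < cmax)
    (C : Ω → ℝ) (hC : ∀ ω, C ω = max (min (A * I ω / H ω) cmax) cmin) :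
    ∫ ω, Real.exp (-(t * T * ρ) * C ω) ∂P =
      Real.exp (-(t * T * ρ) * cmax) +
      (t * T * ρ) * ∫ u in (1 / cmax)..(1 / cmin),
        (u ^ 2)⁻¹ * Real.exp (-(t * T * ρ) / u) *
          ∫ ω, Real.exp (-(A * I ω * u)) ∂P := by
  set s := t * T * ρ
  set L : ℝ → ℝ := fun u ↦ ∫ ω, Real.exp (-(A * I ω * u)) ∂P
  set F : Ω → ℝ := fun ω ↦
    ∫ w in Ioc cmin cmax, (Ioi (A * I ω / H ω)).indicator (fun w ↦ Real.exp (-s * w)) w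
  have hX : Measurable fun ω ↦ A * I ω / H ω := by fun_prop
  have hg : Integrable (fun w ↦ Real.exp (-s * w)) (volume.restrict (Ioc cmin cmax)) :=
    (by fun_prop : Continuous fun w ↦ Real.exp (-s * w)).integrableOn_Ioc
  have hF : Integrable F P := (integrable_uncurry_indicator_Ioi hX hg).integral_prod_left
  have htail : ∀ w ∈ Ioc cmin cmax, P.real {ω | A * I ω / H ω < w} • Real.exp (-s * w) =
      Real.exp (-s / w⁻¹) * L w⁻¹ := fun w hw ↦ by
    rw [measureReal_div_lt_eq_integral_exp_neg (hI.const_mul A) hH hexp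
      (fun ω ↦ mul_nonneg hA.le (hInonneg ω)) (hind.symm.comp (measurable_const_mul A)
      measurable_id) (hc0.trans hw.1), smul_eq_mul, div_inv_eq_mul, mul_comm]
  calc ∫ ω, Real.exp (-s * C ω) ∂P = ∫ ω, (Real.exp (-s * cmax) + s * F ω) ∂P :=
        integral_congr_ae <| ae_of_all _ fun ω ↦ by
          beta_reduce
          rw [hC, exp_neg_mul_max_min_eq hcc.le]
    _ = Real.exp (-s * cmax) + s * ∫ ω, F ω ∂P := by
        rw [integral_add (integrable_const _) (hF.const_mul s), integral_const_mul]
        simp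
    _ = Real.exp (-s * cmax) +
          s * ∫ w in cmin..cmax, Real.exp (-s / w⁻¹) * L w⁻¹ := by
        rw [integral_integral_indicator_Ioi hX hg, setIntegral_congr_fun measurableSet_Ioc htail,
          intervalIntegral.integral_of_le hcc.le]
    _ = _ := by
        have hsubst := intervalIntegral.integral_comp_inv hc0 (hc0.trans hcc)
          fun u ↦ Real.exp (-s / u) * L u
        beta_reduce at hsubst
        rw [hsubst, one_div, one_div]
        simp only [← mul_assoc]
        rfl

/-- Let `H ~ Exp(1)`, `I ≥ 0` integrable and independent of `H`,
`A, t > 0`, `T, ρ > 0`, `0 < c_min < c_max`, and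
`C = max (min (A·I/H) c_max) c_min`. Then
`E[e^{−tTρ C}] = e^{−tTρ c_max} + tTρ ∫_{1/c_max}^{1/c_min} u^{−2} e^{−tTρ/u} E[e^{−AIu}] du`. -/
theorem truncated_laplace_formula
    {Ω : Type*} [MeasurableSpace Ω] (P : Measure Ω) [IsProbabilityMeasure P]
    (H I : Ω → ℝ) (hH : Measurable H) (hI : Measurable I)
    (hexp : ∀ h : ℝ, 0 ≤ h → P {ω | h < H ω} = ENNReal.ofReal (Real.exp (-h)))
    (hInonneg : ∀ ω, 0 ≤ I ω) (hIint : Integrable I P)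
    (hind : IndepFun H I P)
    (A t T ρ : ℝ) (hA : 0 < A) (ht : 0 < t) (hT : 0 < T) (hρ : 0 < ρ)
    (cmin cmax : ℝ) (hc0 : 0 < cmin) (hcc : cmin < cmax)
    (C : Ω → ℝ) (hC : ∀ ω, C ω = max (min (A * I ω / H ω) cmax) cmin) :
    ∫ ω, Real.exp (-(t * T * ρ) * C ω) ∂P =
      Real.exp (-(t * T * ρ) * cmax) +
      (t * T * ρ) * ∫ u in (1 / cmax)..(1 / cmin),
        (u ^ 2)⁻¹ * Real.exp (-(t * T * ρ) / u) *
          ∫ ω, Real.exp (-(A * I ω * u)) ∂P :=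
  truncated_laplace_formula_general P H I hH hI hexp hInonneg hind A t T ρ hA cmin cmax hc0 hcc C hC
end
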